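/- Let w = s_k ⋯ s_1 be a reduced word in a Coxeter system (W,S) and B a Garside shadow. Then π_B(w) = π_B(s_k · π_B(s_{k-1} · π_B(⋯ s_2 · π_B(s_1)))), i.e., the B-projection of w can be computed by iterated projection along any reduced word. -/

import Mathlib

open CoxeterSystem

variable {A W : Type*} [Group W] {M : CoxeterMatrix A}

/-- Right weak order: `u ≤_R v` iff `ℓ(u) + ℓ(u⁻¹v) = ℓ(v)`. -/
def wle (cs : CoxeterSystem M W) (u v : W) : Prop :=
  cs.length u + cs.length (u⁻¹ * v) = cs.length v

/-- A subset of `W` is bounded in the right weak order. -/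
def Bounded (cs : CoxeterSystem M W) (X : Set W) : Prop :=
  ∃ g, ∀ x ∈ X, wle cs x g

/-- `m` is the join (least upper bound) of `X` in the right weak order. -/
def IsJoin (cs : CoxeterSystem M W) (X : Set W) (m : W) : Prop :=
  (∀ x ∈ X, wle cs x m) ∧ ∀ u, (∀ x ∈ X, wle cs x u) → wle cs m u

/-- `v` is a suffix of `w`: `ℓ(w v⁻¹) + ℓ(v) = ℓ(w)`. -/
def IsSuffix (cs : CoxeterSystem M W) (v w : W) : Prop :=
  cs.length (w * v⁻¹) + cs.length v = cs.length w

/-- A Garside shadow: contains the simple reflections, is closed under joins of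
bounded subsets, and is closed under taking suffixes. -/
def IsGarsideShadow (cs : CoxeterSystem M W) (Bs : Set W) : Prop :=
  (∀ i, cs.simple i ∈ Bs) ∧
  (∀ X ⊆ Bs, Bounded cs X → ∀ m, IsJoin cs X m → m ∈ Bs) ∧
  (∀ w ∈ Bs, ∀ v, IsSuffix cs v w → v ∈ Bs)

/-- `π` is the `B`-projection: `π w = ⋁ {g ∈ B | g ≤_R w}`. -/
def IsProj (cs : CoxeterSystem M W) (Bs : Set W) (π : W → W) : Prop :=
  ∀ w, π w ∈ Bs ∧ IsJoin cs {g | g ∈ Bs ∧ wle cs g w} (π w)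

namespace CoxeterSystem

variable (cs : CoxeterSystem M W)

theorem IsReduced.of_cons {i : A} {ω : List A} (h : cs.IsReduced (i :: ω)) :
    cs.IsReduced ω ∧ cs.length (cs.simple i * cs.wordProd ω) = cs.length (cs.wordProd ω) + 1 := by
  have hω : cs.IsReduced ω := h.drop 1
  refine ⟨hω, ?_⟩
  have hlen := h.eq
  rwa [cs.wordProd_cons, List.length_cons, ← hω.eq] at hlen

end CoxeterSystem

section WeakOrder

variable (cs : CoxeterSystem M W)

theorem one_wle (v : W) : wle cs 1 v := by
  simp [wle]

theorem wle_trans {u v x : W} (huv : wle cs u v) (hvx : wle cs v x) : wle cs u x := by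
  unfold wle at *
  have h₁ := cs.length_mul_le (u⁻¹ * v) (v⁻¹ * x)
  have h₂ := cs.length_mul_le u (u⁻¹ * x)
  simp only [mul_assoc, mul_inv_cancel_left] at h₁ h₂
  omega

theorem wle_antisymm {u v : W} (huv : wle cs u v) (hvu : wle cs v u) : u = v := by
  unfold wle at *
  have h := cs.length_mul_le u (u⁻¹ * v)
  rw [mul_inv_cancel_left] at h
  have h₁ : u⁻¹ * v = 1 := cs.length_eq_zero_iff.mp (by omega)
  rw [← inv_mul_eq_one.mp h₁]

theorem length_mul_of_wle {g u v : W} (huv : wle cs u v)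
    (hgv : cs.length (g * v) = cs.length g + cs.length v) :
    cs.length (g * u) = cs.length g + cs.length u := by
  unfold wle at huv
  have h₁ := cs.length_mul_le (g * u) (u⁻¹ * v)
  have h₂ := cs.length_mul_le g u
  simp only [mul_assoc, mul_inv_cancel_left] at h₁
  omega

theorem wle_mul_left {g u v : W} (huv : wle cs u v)
    (hgv : cs.length (g * v) = cs.length g + cs.length v) : wle cs (g * u) (g * v) := by
  have hgu := length_mul_of_wle cs huv hgv
  unfold wle at *
  rw [mul_inv_rev, mul_assoc, inv_mul_cancel_left, hgu, hgv]
  omega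

theorem wle_mul_self {g v : W} (hgv : cs.length (g * v) = cs.length g + cs.length v) :
    wle cs g (g * v) := by
  simpa using wle_mul_left cs (one_wle cs v) hgv

theorem inv_mul_wle_inv_mul {u v x : W} (huv : wle cs u v) (hvx : wle cs v x) :
    wle cs (u⁻¹ * v) (u⁻¹ * x) := by
  have hux := wle_trans cs huv hvx
  unfold wle at *
  have h := cs.length_mul_le (u⁻¹ * v) (v⁻¹ * x)
  simp only [mul_assoc, mul_inv_cancel_left, mul_inv_rev, inv_inv] at h ⊢
  omega

theorem isSuffix_inv_mul {u v : W} (huv : wle cs u v) : IsSuffix cs (u⁻¹ * v) v := by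
  unfold IsSuffix
  rwa [mul_inv_rev, inv_inv, mul_inv_cancel_left]

end WeakOrder

section Projection

variable {cs : CoxeterSystem M W} {Bs : Set W} {π : W → W}

theorem IsGarsideShadow.inv_mul_mem (hB : IsGarsideShadow cs Bs) {u v : W} (hv : v ∈ Bs)
    (huv : wle cs u v) : u⁻¹ * v ∈ Bs :=
  hB.2.2 v hv _ (isSuffix_inv_mul cs huv)

namespace IsProj

variable (hπ : IsProj cs Bs π)
include hπ

theorem wle_self (w : W) : wle cs (π w) w :=
  (hπ w).2.2 w fun _ hg => hg.2

theorem wle_of_mem {g w : W} (hg : g ∈ Bs) (hgw : wle cs g w) : wle cs g (π w) :=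
  (hπ w).2.1 g ⟨hg, hgw⟩

theorem wle_map {v w : W} (hvw : wle cs v w) : wle cs (π v) (π w) :=
  (hπ v).2.2 (π w) fun _ hg => hπ.wle_of_mem hg.1 (wle_trans cs hg.2 hvw)

theorem map_one : π 1 = 1 :=
  wle_antisymm cs (hπ.wle_self 1) (one_wle cs _)

theorem map_simple_mul_map (hB : IsGarsideShadow cs Bs) {i : A} {w : W}
    (hsw : cs.length (cs.simple i * w) = cs.length w + 1) :
    π (cs.simple i * w) = π (cs.simple i * π w) := by
  set s := cs.simple i
  have hs : cs.length s = 1 := cs.length_simple i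
  have hsw' : cs.length (s * w) = cs.length s + cs.length w := by omega
  have hspw : cs.length (s * π w) = cs.length s + cs.length (π w) :=
    length_mul_of_wle cs (hπ.wle_self w) hsw'
  have hle : wle cs (π (s * π w)) (π (s * w)) :=
    hπ.wle_map (wle_mul_left cs (hπ.wle_self w) hsw')
  set b := π (s * w)
  have hbB : b ∈ Bs := (hπ (s * w)).1
  -- `s ≤ b`, so `s b` lies in `B` and below `w`, hence below `π w`; multiplying back by `s`
  -- puts `b` below `s π(w)`.
  have hsb : wle cs s b := hπ.wle_of_mem (hB.1 i) (wle_mul_self cs hsw')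
  have hsbw : wle cs (s * b) (π w) := by
    have h := inv_mul_wle_inv_mul cs hsb (hπ.wle_self (s * w))
    have hmem := hB.inv_mul_mem hbB hsb
    rw [cs.inv_simple] at h hmem
    rw [← mul_assoc, cs.simple_mul_simple_self, one_mul] at h
    exact hπ.wle_of_mem hmem h
  have hbspw : wle cs b (s * π w) := by
    simpa [s, ← mul_assoc] using wle_mul_left cs hsbw hspw
  exact wle_antisymm cs (hπ.wle_of_mem hbB hbspw) hle

end IsProj

end Projection

/-- For a reduced word `w = s_k ⋯ s_1`, the `B`-projection of `w` is computed by
iterated projection: `π_B(w) = π_B(s_k · π_B(s_{k-1} · π_B(⋯ s_2 · π_B(s_1))))`. -/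
theorem stmt_9 (cs : CoxeterSystem M W) (Bs : Set W) (hB : IsGarsideShadow cs Bs)
    (π : W → W) (hπ : IsProj cs Bs π) (ω : List A) (hω : cs.IsReduced ω) :
    π (cs.wordProd ω) = ω.foldr (fun i acc => π (cs.simple i * acc)) 1 := by
  induction ω with
  | nil => exact hπ.map_one
  | cons i ω ih =>
    obtain ⟨hω', hlen⟩ := hω.of_cons
    rw [cs.wordProd_cons, List.foldr_cons, ← ih hω', hπ.map_simple_mul_map hB hlen]
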